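/- arXiv:1905.10917 — 3 statements merged into one kernel-verified Lean document; each statement's English description precedes it below -/
import Mathlib

section
/- For any V, Ṽ ∈ ℝ^d one has ‖T^λ V − T^λ Ṽ‖_μ ≤ γ_λ ‖V − Ṽ‖_μ, where γ_λ := γ(1−λ)/(1−γλ) satisfies γ_λ ≤ γ < 1; in particular T^λ is a strict contraction on (ℝ^d, ‖·‖_μ). -/
open scoped BigOperators

/-- The μ-weighted inner product on ℝ^d. -/
noncomputable def muInner {d : ℕ} (μ a b : Fin d → ℝ) : ℝ := ∑ i, μ i * a i * b i

/-- The μ-weighted norm on ℝ^d. -/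
noncomputable def muNorm {d : ℕ} (μ a : Fin d → ℝ) : ℝ := Real.sqrt (muInner μ a a)

/-- P^λ := (1−λ) Σ_{m=0}^∞ (λγ)^m P^{m+1}. -/
noncomputable def Plam {d : ℕ} (P : Matrix (Fin d) (Fin d) ℝ) (γ lam : ℝ) :
    Matrix (Fin d) (Fin d) ℝ :=
  (1 - lam) • ∑' m : ℕ, (lam * γ) ^ m • P ^ (m + 1)

/-- r̄^λ := (1−λ) Σ_{m=0}^∞ λ^m Σ_{t=0}^m γ^t P^t r̄. -/
noncomputable def rlam {d : ℕ} (P : Matrix (Fin d) (Fin d) ℝ) (γ lam : ℝ)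
    (rbar : Fin d → ℝ) : Fin d → ℝ :=
  (1 - lam) • ∑' m : ℕ, lam ^ m • (∑ t ∈ Finset.range (m + 1), γ ^ t • (P ^ t).mulVec rbar)

/-- The TD operator T^λ V := r̄^λ + γ P^λ V. -/
noncomputable def Tlam {d : ℕ} (P : Matrix (Fin d) (Fin d) ℝ) (γ lam : ℝ)
    (rbar : Fin d → ℝ) (V : Fin d → ℝ) : Fin d → ℝ :=
  rlam P γ lam rbar + γ • (Plam P γ lam).mulVec V

/-- The embedding a ↦ (√μ_i a_i) into Euclidean space, as a linear map. -/
noncomputable def muEmbedL {d : ℕ} (μ : Fin d → ℝ) :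
    (Fin d → ℝ) →ₗ[ℝ] EuclideanSpace ℝ (Fin d) where
  toFun a := WithLp.toLp 2 (fun i => Real.sqrt (μ i) * a i)
  map_add' a b := by ext i; simp [mul_add]
  map_smul' c a := by ext i; simp [mul_comm, mul_left_comm]; ring

lemma muNorm_eq_norm {d : ℕ} (μ : Fin d → ℝ) (hμ : ∀ i, 0 ≤ μ i) (a : Fin d → ℝ) :
    muNorm μ a = ‖muEmbedL μ a‖ := by
  rw [muNorm, muInner, EuclideanSpace.norm_eq]
  congr 1
  refine Finset.sum_congr rfl fun i _ => ?_
  have : (muEmbedL μ a) i = Real.sqrt (μ i) * a i := rfl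
  rw [this, Real.norm_eq_abs, sq_abs, mul_pow, Real.sq_sqrt (hμ i)]
  ring

lemma muNorm_smul {d : ℕ} (μ : Fin d → ℝ) (hμ : ∀ i, 0 ≤ μ i) (c : ℝ) (a : Fin d → ℝ) :
    muNorm μ (c • a) = |c| * muNorm μ a := by
  rw [muNorm_eq_norm μ hμ, muNorm_eq_norm μ hμ, map_smul, norm_smul, Real.norm_eq_abs]

lemma muNorm_mulVec_le {d : ℕ} (P : Matrix (Fin d) (Fin d) ℝ)
    (hP_nonneg : ∀ i j, 0 ≤ P i j) (hP_row : ∀ i, ∑ j, P i j = 1)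
    (μ : Fin d → ℝ) (hμ_pos : ∀ i, 0 < μ i)
    (hμ_inv : ∀ j, ∑ i, μ i * P i j = μ j) (x : Fin d → ℝ) :
    muNorm μ (P.mulVec x) ≤ muNorm μ x := by
  rw [muNorm, muNorm]
  apply Real.sqrt_le_sqrt
  rw [muInner, muInner]
  have key : ∀ i, P.mulVec x i * P.mulVec x i ≤ ∑ j, P i j * (x j * x j) := by
    intro i
    have h1 := Finset.sum_mul_sq_le_sq_mul_sq Finset.univ
      (fun j => Real.sqrt (P i j)) (fun j => Real.sqrt (P i j) * x j)
    have h2 : ∀ j, Real.sqrt (P i j) * (Real.sqrt (P i j) * x j) = P i j * x j := by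
      intro j
      rw [← mul_assoc, Real.mul_self_sqrt (hP_nonneg i j)]
    have h3 : ∀ j, Real.sqrt (P i j) ^ 2 = P i j := fun j => Real.sq_sqrt (hP_nonneg i j)
    have h4 : ∀ j, (Real.sqrt (P i j) * x j) ^ 2 = P i j * (x j * x j) := by
      intro j; rw [mul_pow, h3 j]; ring
    simp only [h2, h3, h4, hP_row i, one_mul] at h1
    have : P.mulVec x i = ∑ j, P i j * x j := rfl
    rw [this, ← sq]
    exact h1
  calc ∑ i, μ i * P.mulVec x i * P.mulVec x i
      ≤ ∑ i, μ i * ∑ j, P i j * (x j * x j) := by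
        refine Finset.sum_le_sum fun i _ => ?_
        rw [mul_assoc]
        exact mul_le_mul_of_nonneg_left (key i) (hμ_pos i).le
    _ = ∑ j, (∑ i, μ i * P i j) * (x j * x j) := by
        simp_rw [Finset.mul_sum]
        rw [Finset.sum_comm]
        refine Finset.sum_congr rfl fun j _ => ?_
        rw [Finset.sum_mul]
        exact Finset.sum_congr rfl fun i _ => by ring
    _ = ∑ j, μ j * x j * x j := by
        refine Finset.sum_congr rfl fun j _ => ?_
        rw [hμ_inv j]; ring

lemma pow_stochastic {d : ℕ} (P : Matrix (Fin d) (Fin d) ℝ)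
    (hP_nonneg : ∀ i j, 0 ≤ P i j) (hP_row : ∀ i, ∑ j, P i j = 1) (n : ℕ) :
    (∀ i j, 0 ≤ (P ^ n) i j) ∧ (∀ i, ∑ j, (P ^ n) i j = 1) := by
  induction n with
  | zero =>
    constructor
    · intro i j; simp [Matrix.one_apply]; positivity
    · intro i; simp [Matrix.one_apply]
  | succ n ih =>
    rw [pow_succ]
    constructor
    · intro i j
      rw [Matrix.mul_apply]
      exact Finset.sum_nonneg fun k _ => mul_nonneg (ih.1 i k) (hP_nonneg k j)
    · intro i
      simp_rw [Matrix.mul_apply]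
      rw [Finset.sum_comm]
      calc ∑ k, ∑ j, (P ^ n) i k * P k j
          = ∑ k, (P ^ n) i k * ∑ j, P k j := by
            simp_rw [Finset.mul_sum]
        _ = 1 := by simp_rw [hP_row, mul_one]; exact ih.2 i

lemma muNorm_pow_mulVec_le {d : ℕ} (P : Matrix (Fin d) (Fin d) ℝ)
    (hP_nonneg : ∀ i j, 0 ≤ P i j) (hP_row : ∀ i, ∑ j, P i j = 1)
    (μ : Fin d → ℝ) (hμ_pos : ∀ i, 0 < μ i)
    (hμ_inv : ∀ j, ∑ i, μ i * P i j = μ j) (n : ℕ) (x : Fin d → ℝ) :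
    muNorm μ ((P ^ n).mulVec x) ≤ muNorm μ x := by
  induction n generalizing x with
  | zero => simp
  | succ n ih =>
    rw [pow_succ, ← Matrix.mulVec_mulVec]
    exact le_trans (ih (P.mulVec x)) (muNorm_mulVec_le P hP_nonneg hP_row μ hμ_pos hμ_inv x)

set_option maxHeartbeats 1000000 in
/-- For any V, Ṽ ∈ ℝ^d, ‖T^λ V − T^λ Ṽ‖_μ ≤ γ_λ ‖V − Ṽ‖_μ with
γ_λ := γ(1−λ)/(1−γλ) ≤ γ < 1; in particular T^λ is a strict contraction in ‖·‖_μ. -/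
theorem Tlam_contraction
    {d : ℕ} (hd : 0 < d)
    (P : Matrix (Fin d) (Fin d) ℝ)
    (hP_nonneg : ∀ i j, 0 ≤ P i j)
    (hP_row : ∀ i, ∑ j, P i j = 1)
    (μ : Fin d → ℝ)
    (hμ_pos : ∀ i, 0 < μ i)
    (hμ_sum : ∑ i, μ i = 1)
    (hμ_inv : ∀ j, ∑ i, μ i * P i j = μ j)
    (γ lam : ℝ) (hγ0 : 0 < γ) (hγ1 : γ < 1) (hlam0 : 0 ≤ lam) (hlam1 : lam < 1)
    (rbar : Fin d → ℝ)
    (V W : Fin d → ℝ) :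
    muNorm μ (Tlam P γ lam rbar V - Tlam P γ lam rbar W)
      ≤ (γ * (1 - lam) / (1 - γ * lam)) * muNorm μ (V - W) ∧
    γ * (1 - lam) / (1 - γ * lam) ≤ γ := by
  have hμ_nonneg : ∀ i, 0 ≤ μ i := fun i => (hμ_pos i).le
  have hlg0 : 0 ≤ lam * γ := mul_nonneg hlam0 hγ0.le
  have hlg1 : lam * γ < 1 := lt_of_le_of_lt (mul_le_of_le_one_right hlam0 hγ1.le) hlam1
  have hden : 0 < 1 - γ * lam := by nlinarith
  set u := V - W with hu
  -- summability of the matrix series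
  have hentry : ∀ n (i j : Fin d), (P ^ n) i j ≤ 1 := by
    intro n i j
    calc (P ^ n) i j ≤ ∑ k, (P ^ n) i k :=
          Finset.single_le_sum (fun k _ => (pow_stochastic P hP_nonneg hP_row n).1 i k)
            (Finset.mem_univ j)
      _ = 1 := (pow_stochastic P hP_nonneg hP_row n).2 i
  have hMsum : Summable (fun m : ℕ => (lam * γ) ^ m • P ^ (m + 1)) := by
    refine Pi.summable.mpr ?_
    intro i
    rw [Pi.summable]
    intro j
    apply Summable.of_nonneg_of_le
      (fun m => mul_nonneg (pow_nonneg hlg0 m) ((pow_stochastic P hP_nonneg hP_row (m+1)).1 i j))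
      (fun m => ?_) (summable_geometric_of_lt_one hlg0 hlg1)
    show (lam * γ) ^ m * (P ^ (m + 1)) i j ≤ (lam * γ) ^ m
    calc (lam * γ) ^ m * (P ^ (m + 1)) i j ≤ (lam * γ) ^ m * 1 :=
          mul_le_mul_of_nonneg_left (hentry (m+1) i j) (pow_nonneg hlg0 m)
      _ = (lam * γ) ^ m := mul_one _
  -- the mulVec continuous linear map
  let L : Matrix (Fin d) (Fin d) ℝ →ₗ[ℝ] (Fin d → ℝ) :=
    { toFun := fun A => A.mulVec u
      map_add' := fun A B => Matrix.add_mulVec A B u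
      map_smul' := fun c A => Matrix.smul_mulVec c A u }
  let Lc : Matrix (Fin d) (Fin d) ℝ →L[ℝ] (Fin d → ℝ) := LinearMap.toContinuousLinearMap L
  have hLc : ∀ A, Lc A = A.mulVec u := fun A => rfl
  -- push mulVec through tsum
  have hmulVec_tsum : (∑' m : ℕ, (lam * γ) ^ m • P ^ (m + 1)).mulVec u
      = ∑' m : ℕ, (lam * γ) ^ m • (P ^ (m + 1)).mulVec u := by
    have := Lc.map_tsum hMsum
    rw [hLc] at this
    rw [this]
    refine tsum_congr fun m => ?_
    rw [hLc, Matrix.smul_mulVec]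
  -- difference of Tlam
  have hdiff : Tlam P γ lam rbar V - Tlam P γ lam rbar W
      = (γ * (1 - lam)) • ∑' m : ℕ, (lam * γ) ^ m • (P ^ (m + 1)).mulVec u := by
    simp only [Tlam, Plam]
    rw [add_sub_add_left_eq_sub, ← smul_sub, ← Matrix.mulVec_sub,
      Matrix.smul_mulVec, hmulVec_tsum, smul_smul, mul_comm γ (1 - lam), mul_comm]
  -- embedding
  let E := LinearMap.toContinuousLinearMap (muEmbedL μ)
  have hE : ∀ a, E a = muEmbedL μ a := fun a => rfl
  set f : ℕ → (Fin d → ℝ) := fun m => (lam * γ) ^ m • (P ^ (m + 1)).mulVec u with hf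
  have hfsum : Summable f := by
    have : f = fun m => Lc ((lam * γ) ^ m • P ^ (m + 1)) := by
      funext m; rw [hLc, Matrix.smul_mulVec]
    rw [this]
    exact hMsum.map Lc.toLinearMap Lc.continuous
  have hnormbound : ∀ m, ‖E (f m)‖ ≤ (lam * γ) ^ m * muNorm μ u := by
    intro m
    rw [hE, ← muNorm_eq_norm μ hμ_nonneg, hf]
    simp only
    rw [muNorm_smul μ hμ_nonneg, abs_of_nonneg (pow_nonneg hlg0 m)]
    exact mul_le_mul_of_nonneg_left
      (muNorm_pow_mulVec_le P hP_nonneg hP_row μ hμ_pos hμ_inv (m + 1) u)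
      (pow_nonneg hlg0 m)
  have hgsum : Summable (fun m : ℕ => (lam * γ) ^ m * muNorm μ u) :=
    (summable_geometric_of_lt_one hlg0 hlg1).mul_right _
  have hEnormsum : Summable (fun m => ‖E (f m)‖) :=
    Summable.of_nonneg_of_le (fun m => norm_nonneg _) hnormbound hgsum
  have hmain : muNorm μ (∑' m, f m) ≤ (1 - lam * γ)⁻¹ * muNorm μ u := by
    rw [muNorm_eq_norm μ hμ_nonneg, ← hE, E.map_tsum hfsum]
    calc ‖∑' m, E (f m)‖ ≤ ∑' m, ‖E (f m)‖ := norm_tsum_le_tsum_norm hEnormsum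
      _ ≤ ∑' m, (lam * γ) ^ m * muNorm μ u := Summable.tsum_le_tsum hnormbound hEnormsum hgsum
      _ = (1 - lam * γ)⁻¹ * muNorm μ u := by
          rw [tsum_mul_right, tsum_geometric_of_lt_one hlg0 hlg1]
  constructor
  · rw [hdiff, muNorm_smul μ hμ_nonneg,
      abs_of_nonneg (mul_nonneg hγ0.le (by linarith : (0:ℝ) ≤ 1 - lam))]
    calc γ * (1 - lam) * muNorm μ (∑' m, f m)
        ≤ γ * (1 - lam) * ((1 - lam * γ)⁻¹ * muNorm μ u) :=
          mul_le_mul_of_nonneg_left hmain (mul_nonneg hγ0.le (by linarith))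
      _ = γ * (1 - lam) / (1 - γ * lam) * muNorm μ u := by
          rw [mul_comm lam γ]; field_simp
  · rw [div_le_iff₀ hden]
    nlinarith
end

section
/- (Perturbation of the metric.) Let V : ℝ^p → ℝ^d be differentiable with derivative map w ↦ DV_w that is L-Lipschitz in the operator norm, let w₀ ∈ ℝ^p, and assume ‖DV_{w₀}‖ ≤ 1 and that the smallest singular value σ of DV_{w₀} (i.e. the largest σ with ‖DV_{w₀}ᵀ u‖₂ ≥ σ‖u‖₂ for all u ∈ ℝ^d) is strictly positive. Fix γ ∈ (0,1) and set ρ := (1−γ)σ²/(48 L). Then for every w with ‖w − w₀‖₂ ≤ ρ the matrix DV_w DV_wᵀ is invertible, and writing g_w := (DV_w DV_wᵀ)⁻¹ and g₀ := (DV_{w₀} DV_{w₀}ᵀ)⁻¹, there exists a d×d matrix g̃_w with g₀ = (I + g̃_w) g_w and ‖g̃_w‖ ≤ (1−γ)/3. -/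
open Matrix
open scoped BigOperators

/-- The Euclidean norm on ℝ^n. -/
noncomputable def eNorm {n : ℕ} (v : Fin n → ℝ) : ℝ := Real.sqrt (∑ i, v i ^ 2)

/-- The operator norm of a d×p real matrix, induced by the Euclidean norms. -/
noncomputable def matOpNorm {d p : ℕ} (A : Matrix (Fin d) (Fin p) ℝ) : ℝ :=
  ‖LinearMap.toContinuousLinearMap (Matrix.toEuclideanLin A)‖

open scoped Matrix.Norms.L2Operator

lemma matOpNorm_eq {d p : ℕ} (A : Matrix (Fin d) (Fin p) ℝ) : matOpNorm A = ‖A‖ := rfl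

lemma eNorm_eq {n : ℕ} (v : Fin n → ℝ) :
    eNorm v = ‖(WithLp.equiv 2 (Fin n → ℝ)).symm v‖ := by
  rw [EuclideanSpace.norm_eq]
  simp [eNorm, Real.norm_eq_abs, sq_abs]

lemma eNorm_nonneg {n : ℕ} (v : Fin n → ℝ) : 0 ≤ eNorm v := by
  rw [eNorm_eq]; exact norm_nonneg _

lemma eNorm_pos {n : ℕ} {v : Fin n → ℝ} (hv : v ≠ 0) : 0 < eNorm v := by
  rw [eNorm_eq]
  refine norm_pos_iff.mpr ?_
  simpa using hv

lemma matOpNorm_nonneg {d p : ℕ} (A : Matrix (Fin d) (Fin p) ℝ) : 0 ≤ matOpNorm A := by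
  rw [matOpNorm_eq]; exact norm_nonneg _

lemma eNorm_mulVec_le {d p : ℕ} (A : Matrix (Fin d) (Fin p) ℝ) (x : Fin p → ℝ) :
    eNorm (A.mulVec x) ≤ matOpNorm A * eNorm x := by
  rw [eNorm_eq, eNorm_eq, matOpNorm_eq]
  exact A.l2_opNorm_mulVec ((WithLp.equiv 2 (Fin p → ℝ)).symm x)

lemma matOpNorm_le {d p : ℕ} (A : Matrix (Fin d) (Fin p) ℝ) {c : ℝ} (hc : 0 ≤ c)
    (h : ∀ x, eNorm (A.mulVec x) ≤ c * eNorm x) : matOpNorm A ≤ c := by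
  refine ContinuousLinearMap.opNorm_le_bound _ hc fun x => ?_
  have := h ((WithLp.equiv 2 (Fin p → ℝ)) x)
  rw [eNorm_eq, eNorm_eq] at this
  simpa [toEuclideanLin_apply] using this

lemma matOpNorm_transpose {d p : ℕ} (A : Matrix (Fin d) (Fin p) ℝ) :
    matOpNorm Aᵀ = matOpNorm A := by
  have h : Aᴴ = Aᵀ := by ext i j; simp [conjTranspose_apply]
  rw [matOpNorm_eq, matOpNorm_eq, ← A.l2_opNorm_conjTranspose, h]

lemma matOpNorm_mul_le {d p q : ℕ} (A : Matrix (Fin d) (Fin p) ℝ) (B : Matrix (Fin p) (Fin q) ℝ) :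
    matOpNorm (A * B) ≤ matOpNorm A * matOpNorm B := by
  rw [matOpNorm_eq, matOpNorm_eq, matOpNorm_eq]
  exact A.l2_opNorm_mul B

lemma eNorm_add_le {n : ℕ} (v u : Fin n → ℝ) : eNorm (v + u) ≤ eNorm v + eNorm u := by
  rw [eNorm_eq, eNorm_eq, eNorm_eq]
  rw [show (WithLp.equiv 2 (Fin n → ℝ)).symm (v + u)
      = (WithLp.equiv 2 (Fin n → ℝ)).symm v + (WithLp.equiv 2 (Fin n → ℝ)).symm u by simp]
  exact norm_add_le _ _

lemma dotProduct_le {n : ℕ} (v u : Fin n → ℝ) : v ⬝ᵥ u ≤ eNorm v * eNorm u := by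
  rw [eNorm_eq, eNorm_eq]
  have := real_inner_le_norm ((WithLp.equiv 2 (Fin n → ℝ)).symm v)
    ((WithLp.equiv 2 (Fin n → ℝ)).symm u)
  rw [PiLp.inner_apply] at this
  simpa [dotProduct, RCLike.inner_apply, mul_comm] using this

lemma dotProduct_self_eq {n : ℕ} (v : Fin n → ℝ) : v ⬝ᵥ v = eNorm v ^ 2 := by
  rw [eNorm_eq, ← real_inner_self_eq_norm_sq]
  rw [PiLp.inner_apply]
  simp [dotProduct, sq]

lemma matOpNorm_add_le {d p : ℕ} (A B : Matrix (Fin d) (Fin p) ℝ) :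
    matOpNorm (A + B) ≤ matOpNorm A + matOpNorm B := by
  rw [matOpNorm_eq, matOpNorm_eq, matOpNorm_eq]; exact norm_add_le _ _

lemma matOpNorm_neg {d p : ℕ} (A : Matrix (Fin d) (Fin p) ℝ) :
    matOpNorm (-A) = matOpNorm A := by
  rw [matOpNorm_eq, matOpNorm_eq]; exact norm_neg _

lemma dot_self_mul_transpose {d p : ℕ} (M : Matrix (Fin d) (Fin p) ℝ) (x : Fin d → ℝ) :
    x ⬝ᵥ ((M * Mᵀ) *ᵥ x) = eNorm (Mᵀ *ᵥ x) ^ 2 := by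
  rw [← mulVec_mulVec, dotProduct_mulVec, ← mulVec_transpose, dotProduct_self_eq]

lemma posdef_self_mul_transpose {d p : ℕ} (M : Matrix (Fin d) (Fin p) ℝ) {c : ℝ} (hc : 0 < c)
    (h : ∀ u, c * eNorm u ≤ eNorm (Mᵀ *ᵥ u)) : (M * Mᵀ).PosDef := by
  have hherm : (M * Mᵀ).IsHermitian := by
    have h2 : Mᴴ = Mᵀ := by ext i j; simp [conjTranspose_apply]
    rw [← h2]; exact isHermitian_mul_conjTranspose_self M
  refine Matrix.PosDef.of_dotProduct_mulVec_pos hherm fun x hx => ?_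
  have hx' : (0:ℝ) < eNorm x := eNorm_pos hx
  have h1 : x ⬝ᵥ ((M * Mᵀ) *ᵥ x) = eNorm (Mᵀ *ᵥ x) ^ 2 := dot_self_mul_transpose M x
  have h2 : c * eNorm x ≤ eNorm (Mᵀ *ᵥ x) := h x
  have h3 : (0:ℝ) < eNorm (Mᵀ *ᵥ x) ^ 2 := by nlinarith [mul_pos hc hx']
  simpa [h1] using h3

lemma isUnit_self_mul_transpose {d p : ℕ} (M : Matrix (Fin d) (Fin p) ℝ) {c : ℝ} (hc : 0 < c)
    (h : ∀ u, c * eNorm u ≤ eNorm (Mᵀ *ᵥ u)) : IsUnit (M * Mᵀ) := by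
  have hpos := posdef_self_mul_transpose M hc h
  exact (Matrix.isUnit_iff_isUnit_det _).mpr (isUnit_iff_ne_zero.mpr hpos.det_pos.ne')

/-- Bound on the norm of the inverse of `M * Mᵀ` given a singular value lower bound. -/
lemma inv_self_mul_transpose_bound {d p : ℕ} (M : Matrix (Fin d) (Fin p) ℝ) {c : ℝ} (hc : 0 < c)
    (h : ∀ u, c * eNorm u ≤ eNorm (Mᵀ *ᵥ u)) :
    matOpNorm ((M * Mᵀ)⁻¹) ≤ (c ^ 2)⁻¹ := by
  have hunit := isUnit_self_mul_transpose M hc h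
  have hdet : IsUnit (M * Mᵀ).det := (Matrix.isUnit_iff_isUnit_det _).mp hunit
  refine matOpNorm_le _ (by positivity) fun v => ?_
  set u : Fin d → ℝ := (M * Mᵀ)⁻¹ *ᵥ v with hu
  have hMu : (M * Mᵀ) *ᵥ u = v := by
    rw [hu, mulVec_mulVec, Matrix.mul_nonsing_inv _ hdet, one_mulVec]
  have h1 : (c * eNorm u) ^ 2 ≤ eNorm (Mᵀ *ᵥ u) ^ 2 := by
    have := h u
    have h0 : 0 ≤ c * eNorm u := mul_nonneg hc.le (eNorm_nonneg u)
    nlinarith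
  have h2 : eNorm (Mᵀ *ᵥ u) ^ 2 = u ⬝ᵥ v := by rw [← dot_self_mul_transpose, hMu]
  have h3 : u ⬝ᵥ v ≤ eNorm u * eNorm v := dotProduct_le u v
  have key : c ^ 2 * eNorm u ≤ eNorm v := by
    rcases eq_or_lt_of_le (eNorm_nonneg u) with h0 | h0
    · rw [← h0]; simpa using eNorm_nonneg v
    · nlinarith
  have : eNorm u ≤ (c ^ 2)⁻¹ * eNorm v := by
    rw [inv_mul_eq_div, le_div_iff₀ (by positivity)]
    nlinarith
  exact this

/-- Perturbation of the metric: if DV is L-Lipschitz, ‖DV_{w₀}‖ ≤ 1 and the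
smallest singular value σ of DV_{w₀} is positive, then for every w with
‖w − w₀‖₂ ≤ ρ := (1−γ)σ²/(48L), the matrix DV_w DV_wᵀ is invertible and, writing
g_w := (DV_w DV_wᵀ)⁻¹ and g₀ := (DV_{w₀} DV_{w₀}ᵀ)⁻¹, there is a d×d matrix g̃_w
with g₀ = (I + g̃_w) g_w and ‖g̃_w‖ ≤ (1−γ)/3. -/
theorem perturbation_of_metric
    {d p : ℕ}
    (V : (Fin p → ℝ) → (Fin d → ℝ))
    (DV : (Fin p → ℝ) → Matrix (Fin d) (Fin p) ℝ)
    (hV : ∀ w, HasFDerivAt V (LinearMap.toContinuousLinearMap (Matrix.mulVecLin (DV w))) w)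
    (L : ℝ) (hL : 0 < L)
    (hLip : ∀ w w', matOpNorm (DV w - DV w') ≤ L * eNorm (w - w'))
    (w₀ : Fin p → ℝ)
    (hbound : matOpNorm (DV w₀) ≤ 1)
    (σ : ℝ) (hσ : 0 < σ)
    (hσmin : ∀ u : Fin d → ℝ, σ * eNorm u ≤ eNorm ((DV w₀)ᵀ.mulVec u))
    (hσmax : ∀ σ' : ℝ, (∀ u : Fin d → ℝ, σ' * eNorm u ≤ eNorm ((DV w₀)ᵀ.mulVec u)) → σ' ≤ σ)
    (γ : ℝ) (hγ0 : 0 < γ) (hγ1 : γ < 1)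
    (w : Fin p → ℝ) (hw : eNorm (w - w₀) ≤ (1 - γ) * σ ^ 2 / (48 * L)) :
    IsUnit (DV w * (DV w)ᵀ) ∧
    ∃ gtilde : Matrix (Fin d) (Fin d) ℝ,
      (DV w₀ * (DV w₀)ᵀ)⁻¹ = (1 + gtilde) * (DV w * (DV w)ᵀ)⁻¹ ∧
      matOpNorm gtilde ≤ (1 - γ) / 3 := by
  have hσ1 : σ ≤ 1 := by
    rcases Nat.eq_zero_or_pos d with hd | hd
    · exfalso
      subst hd
      have h := hσmax (σ + 1) (fun u => by
        have hu : eNorm u = 0 := by simp [eNorm]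
        rw [hu, mul_zero]; exact eNorm_nonneg _)
      linarith
    · set i0 : Fin d := ⟨0, hd⟩
      have hu1 : eNorm (Pi.single i0 (1:ℝ)) = 1 := by
        have hs : ∑ i, (Pi.single i0 (1:ℝ) i) ^ 2 = (1:ℝ) := by
          rw [Finset.sum_eq_single i0]
          · simp
          · intro b _ hb; simp [Pi.single_apply, hb]
          · simp
        simp [eNorm, hs]
      have h1 := hσmin (Pi.single i0 (1:ℝ))
      have h2 := eNorm_mulVec_le (DV w₀)ᵀ (Pi.single i0 (1:ℝ))
      rw [matOpNorm_transpose, hu1, mul_one] at h2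
      rw [hu1, mul_one] at h1
      calc σ ≤ eNorm ((DV w₀)ᵀ *ᵥ Pi.single i0 (1:ℝ)) := h1
        _ ≤ matOpNorm (DV w₀) := h2
        _ ≤ 1 := hbound
  set A := DV w₀ with hA
  set B := DV w with hB
  set e := (1 - γ) * σ ^ 2 / 48 with he
  have hγ' : (0:ℝ) < 1 - γ := by linarith
  have he0 : 0 < e := by rw [he]; positivity
  have hBA : matOpNorm (B - A) ≤ e := by
    have h1 := hLip w w₀
    have h2 : L * eNorm (w - w₀) ≤ L * ((1 - γ) * σ ^ 2 / (48 * L)) :=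
      mul_le_mul_of_nonneg_left hw hL.le
    have h3 : L * ((1 - γ) * σ ^ 2 / (48 * L)) = e := by
      rw [he]; field_simp
    linarith
  have hσσ : (1 - γ) * σ ^ 2 ≤ σ := by
    nlinarith [mul_nonneg hγ0.le (sq_nonneg σ), mul_nonneg (sub_nonneg.mpr hσ1) hσ.le]
  have he48 : e ≤ 1 / 48 := by rw [he]; nlinarith
  have heσ : e < σ := by rw [he]; nlinarith
  have hσe : 0 < σ - e := by linarith
  have hlowB : ∀ u, (σ - e) * eNorm u ≤ eNorm (Bᵀ *ᵥ u) := by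
    intro u
    have hsplit : Aᵀ *ᵥ u = Bᵀ *ᵥ u + (A - B)ᵀ *ᵥ u := by
      rw [transpose_sub, sub_mulVec]; abel
    have h1 := eNorm_add_le (Bᵀ *ᵥ u) ((A - B)ᵀ *ᵥ u)
    rw [← hsplit] at h1
    have h2 : eNorm ((A - B)ᵀ *ᵥ u) ≤ e * eNorm u := by
      calc eNorm ((A - B)ᵀ *ᵥ u) ≤ matOpNorm (A - B)ᵀ * eNorm u := eNorm_mulVec_le _ _
        _ = matOpNorm (B - A) * eNorm u := by
            rw [matOpNorm_transpose, ← matOpNorm_neg (B - A), neg_sub]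
        _ ≤ e * eNorm u := mul_le_mul_of_nonneg_right hBA (eNorm_nonneg u)
    have h3 := hσmin u
    nlinarith [eNorm_nonneg u]
  have hUnitB : IsUnit (B * Bᵀ) := isUnit_self_mul_transpose B hσe hlowB
  have hUnitA : IsUnit (A * Aᵀ) := isUnit_self_mul_transpose A hσ hσmin
  have hdetA : IsUnit (A * Aᵀ).det := (Matrix.isUnit_iff_isUnit_det _).mp hUnitA
  have hdetB : IsUnit (B * Bᵀ).det := (Matrix.isUnit_iff_isUnit_det _).mp hUnitB
  refine ⟨hUnitB, (A * Aᵀ)⁻¹ * (B * Bᵀ) - 1, ?_, ?_⟩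
  · have h1 : (1 : Matrix (Fin d) (Fin d) ℝ) + ((A * Aᵀ)⁻¹ * (B * Bᵀ) - 1)
        = (A * Aᵀ)⁻¹ * (B * Bᵀ) := by abel
    rw [h1, Matrix.mul_assoc, Matrix.mul_nonsing_inv _ hdetB, Matrix.mul_one]
  · have hgid : (A * Aᵀ)⁻¹ * (B * Bᵀ) - 1 = (A * Aᵀ)⁻¹ * (B * Bᵀ - A * Aᵀ) := by
      rw [Matrix.mul_sub, Matrix.nonsing_inv_mul _ hdetA]
    rw [hgid]
    have hinv : matOpNorm ((A * Aᵀ)⁻¹) ≤ (σ ^ 2)⁻¹ := inv_self_mul_transpose_bound A hσ hσmin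
    have hBnorm : matOpNorm B ≤ 1 + e := by
      have h1 : B = A + (B - A) := by abel
      calc matOpNorm B = matOpNorm (A + (B - A)) := by rw [← h1]
        _ ≤ matOpNorm A + matOpNorm (B - A) := matOpNorm_add_le _ _
        _ ≤ 1 + e := add_le_add hbound hBA
    have hD : matOpNorm (B * Bᵀ - A * Aᵀ) ≤ e * (2 + e) := by
      have hid : B * Bᵀ - A * Aᵀ = (B - A) * Bᵀ + A * (B - A)ᵀ := by
        rw [transpose_sub, Matrix.sub_mul, Matrix.mul_sub]; abel
      have h1 : matOpNorm ((B - A) * Bᵀ) ≤ e * (1 + e) := by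
        calc matOpNorm ((B - A) * Bᵀ) ≤ matOpNorm (B - A) * matOpNorm Bᵀ := matOpNorm_mul_le _ _
          _ ≤ e * (1 + e) := by
              rw [matOpNorm_transpose]
              exact mul_le_mul hBA hBnorm (matOpNorm_nonneg _) he0.le
      have h2 : matOpNorm (A * (B - A)ᵀ) ≤ e := by
        calc matOpNorm (A * (B - A)ᵀ) ≤ matOpNorm A * matOpNorm (B - A)ᵀ := matOpNorm_mul_le _ _
          _ ≤ 1 * e := by
              rw [matOpNorm_transpose]
              exact mul_le_mul hbound hBA (matOpNorm_nonneg _) (by norm_num)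
          _ = e := one_mul e
      calc matOpNorm (B * Bᵀ - A * Aᵀ) = matOpNorm ((B - A) * Bᵀ + A * (B - A)ᵀ) := by rw [hid]
        _ ≤ matOpNorm ((B - A) * Bᵀ) + matOpNorm (A * (B - A)ᵀ) := matOpNorm_add_le _ _
        _ ≤ e * (1 + e) + e := add_le_add h1 h2
        _ = e * (2 + e) := by ring
    calc matOpNorm ((A * Aᵀ)⁻¹ * (B * Bᵀ - A * Aᵀ))
        ≤ matOpNorm ((A * Aᵀ)⁻¹) * matOpNorm (B * Bᵀ - A * Aᵀ) := matOpNorm_mul_le _ _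
      _ ≤ (σ ^ 2)⁻¹ * (e * (2 + e)) := by
          apply mul_le_mul hinv hD (matOpNorm_nonneg _) (by positivity)
      _ = (σ ^ 2)⁻¹ * σ ^ 2 * ((1 - γ) * (2 + e) / 48) := by
          rw [he]; ring
      _ = (1 - γ) * (2 + e) / 48 := by
          rw [inv_mul_cancel₀ (by positivity : (σ:ℝ) ^ 2 ≠ 0), one_mul]
      _ ≤ (1 - γ) / 3 := by
          nlinarith [mul_nonneg hγ'.le (by linarith : (0:ℝ) ≤ 1 / 48 - e)]
end

section
/- Let A be a real d×r matrix and σ > 0 a constant such that ‖A v‖_μ ≥ σ ‖v‖₂ for all v ∈ ℝ^r. Then for every v ∈ ℝ^r, ⟨A v, γ P^λ (A v) − A v⟩_μ ≤ (γ − 1) σ² ‖v‖₂². -/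
open Matrix
open scoped BigOperators

lemma muInner_self_nonneg {d : ℕ} (μ a : Fin d → ℝ) (hμ : ∀ i, 0 ≤ μ i) :
    0 ≤ muInner μ a a := by
  apply Finset.sum_nonneg
  intro i _
  have := hμ i
  nlinarith [sq_nonneg (a i)]

lemma muInner_abs_cs {d : ℕ} (μ a b : Fin d → ℝ) (hμ : ∀ i, 0 ≤ μ i) :
    |muInner μ a b| ≤ muNorm μ a * muNorm μ b := by
  have key : (muInner μ a b) ^ 2 ≤ (muInner μ a a) * (muInner μ b b) := by
    have h := Finset.sum_mul_sq_le_sq_mul_sq Finset.univ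
      (fun i => Real.sqrt (μ i) * a i) (fun i => Real.sqrt (μ i) * b i)
    have e1 : (∑ i, Real.sqrt (μ i) * a i * (Real.sqrt (μ i) * b i)) = muInner μ a b := by
      apply Finset.sum_congr rfl; intro i _
      have h2 : Real.sqrt (μ i) * Real.sqrt (μ i) = μ i := Real.mul_self_sqrt (hμ i)
      linear_combination (a i * b i) * h2
    have e2 : (∑ i, (Real.sqrt (μ i) * a i) ^ 2) = muInner μ a a := by
      apply Finset.sum_congr rfl; intro i _
      have h2 : Real.sqrt (μ i) * Real.sqrt (μ i) = μ i := Real.mul_self_sqrt (hμ i)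
      linear_combination (a i * a i) * h2
    have e3 : (∑ i, (Real.sqrt (μ i) * b i) ^ 2) = muInner μ b b := by
      apply Finset.sum_congr rfl; intro i _
      have h2 : Real.sqrt (μ i) * Real.sqrt (μ i) = μ i := Real.mul_self_sqrt (hμ i)
      linear_combination (b i * b i) * h2
    rw [e1, e2, e3] at h
    exact h
  have ha := muInner_self_nonneg μ a hμ
  have hb := muInner_self_nonneg μ b hμ
  calc |muInner μ a b| = Real.sqrt ((muInner μ a b) ^ 2) := (Real.sqrt_sq_eq_abs _).symm
    _ ≤ Real.sqrt (muInner μ a a * muInner μ b b) := Real.sqrt_le_sqrt key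
    _ = muNorm μ a * muNorm μ b := Real.sqrt_mul ha _

lemma muInner_cs {d : ℕ} (μ a b : Fin d → ℝ) (hμ : ∀ i, 0 ≤ μ i) :
    muInner μ a b ≤ muNorm μ a * muNorm μ b :=
  le_trans (le_abs_self _) (muInner_abs_cs μ a b hμ)

lemma pow_stoch {d : ℕ} (P : Matrix (Fin d) (Fin d) ℝ)
    (h0 : ∀ i j, 0 ≤ P i j) (h1 : ∀ i, ∑ j, P i j = 1) (k : ℕ) :
    (∀ i j, 0 ≤ (P ^ k) i j) ∧ (∀ i, ∑ j, (P ^ k) i j = 1) := by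
  induction k with
  | zero =>
    constructor
    · intro i j; simp [Matrix.one_apply]; positivity
    · intro i; simp [Matrix.one_apply]
  | succ k ih =>
    have hmul : P ^ (k + 1) = P ^ k * P := pow_succ P k
    constructor
    · intro i j
      rw [hmul, Matrix.mul_apply]
      exact Finset.sum_nonneg fun l _ => mul_nonneg (ih.1 i l) (h0 l j)
    · intro i
      rw [hmul]
      simp only [Matrix.mul_apply]
      rw [Finset.sum_comm]
      calc ∑ l, ∑ j, (P ^ k) i l * P l j = ∑ l, (P ^ k) i l * ∑ j, P l j := by
            simp [Finset.mul_sum]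
        _ = 1 := by simp [h1, ih.2 i]

lemma pow_entry_le_one {d : ℕ} (P : Matrix (Fin d) (Fin d) ℝ)
    (h0 : ∀ i j, 0 ≤ P i j) (h1 : ∀ i, ∑ j, P i j = 1) (k : ℕ) (i j : Fin d) :
    (P ^ k) i j ≤ 1 := by
  obtain ⟨hk0, hk1⟩ := pow_stoch P h0 h1 k
  calc (P ^ k) i j ≤ ∑ l, (P ^ k) i l :=
        Finset.single_le_sum (fun l _ => hk0 i l) (Finset.mem_univ j)
    _ = 1 := hk1 i

lemma pow_inv {d : ℕ} (P : Matrix (Fin d) (Fin d) ℝ) (μ : Fin d → ℝ)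
    (hinv : ∀ j, ∑ i, μ i * P i j = μ j) (k : ℕ) (j : Fin d) :
    ∑ i, μ i * (P ^ k) i j = μ j := by
  induction k generalizing j with
  | zero => simp [Matrix.one_apply]
  | succ k ih =>
    rw [pow_succ]
    simp only [Matrix.mul_apply]
    calc ∑ i, μ i * ∑ l, (P ^ k) i l * P l j
        = ∑ i, ∑ l, μ i * (P ^ k) i l * P l j := by
          simp [Finset.mul_sum, mul_assoc]
      _ = ∑ l, (∑ i, μ i * (P ^ k) i l) * P l j := by
          rw [Finset.sum_comm]; simp [Finset.sum_mul]
      _ = ∑ l, μ l * P l j := by simp only [ih]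
      _ = μ j := hinv j

lemma stoch_nonexp {d : ℕ} (Q : Matrix (Fin d) (Fin d) ℝ)
    (h0 : ∀ i j, 0 ≤ Q i j) (h1 : ∀ i, ∑ j, Q i j = 1)
    (μ : Fin d → ℝ) (hμ : ∀ i, 0 ≤ μ i)
    (hinv : ∀ j, ∑ i, μ i * Q i j = μ j) (x : Fin d → ℝ) :
    muInner μ (Q.mulVec x) (Q.mulVec x) ≤ muInner μ x x := by
  have jensen : ∀ i, (Q.mulVec x i) ^ 2 ≤ ∑ j, Q i j * x j ^ 2 := by
    intro i
    have h := Finset.sum_mul_sq_le_sq_mul_sq Finset.univ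
      (fun j => Real.sqrt (Q i j)) (fun j => Real.sqrt (Q i j) * x j)
    have e1 : (∑ j, Real.sqrt (Q i j) * (Real.sqrt (Q i j) * x j)) = Q.mulVec x i := by
      apply Finset.sum_congr rfl; intro j _
      have h2 : Real.sqrt (Q i j) * Real.sqrt (Q i j) = Q i j := Real.mul_self_sqrt (h0 i j)
      show _ = Q i j * x j
      linear_combination (x j) * h2
    have e2 : (∑ j, (Real.sqrt (Q i j)) ^ 2) = 1 := by
      rw [← h1 i]; apply Finset.sum_congr rfl; intro j _
      exact Real.sq_sqrt (h0 i j)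
    have e3 : (∑ j, (Real.sqrt (Q i j) * x j) ^ 2) = ∑ j, Q i j * x j ^ 2 := by
      apply Finset.sum_congr rfl; intro j _
      have h2 : Real.sqrt (Q i j) * Real.sqrt (Q i j) = Q i j := Real.mul_self_sqrt (h0 i j)
      linear_combination (x j ^ 2) * h2
    rw [e1, e2, e3, one_mul] at h
    exact h
  calc muInner μ (Q.mulVec x) (Q.mulVec x)
      = ∑ i, μ i * (Q.mulVec x i) ^ 2 := by
        apply Finset.sum_congr rfl; intro i _; ring
    _ ≤ ∑ i, μ i * ∑ j, Q i j * x j ^ 2 := by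
        apply Finset.sum_le_sum; intro i _
        exact mul_le_mul_of_nonneg_left (jensen i) (hμ i)
    _ = ∑ j, (∑ i, μ i * Q i j) * x j ^ 2 := by
        simp only [Finset.mul_sum]
        rw [Finset.sum_comm]
        simp only [Finset.sum_mul]
        apply Finset.sum_congr rfl; intro j _
        apply Finset.sum_congr rfl; intro i _; ring
    _ = ∑ j, μ j * x j ^ 2 := by simp only [hinv]
    _ = muInner μ x x := by apply Finset.sum_congr rfl; intro j _; ring

/-- If A is a d×r matrix with ‖A v‖_μ ≥ σ ‖v‖₂ for all v, then
⟨A v, γ P^λ (A v) − A v⟩_μ ≤ (γ − 1) σ² ‖v‖₂². -/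
theorem injective_matrix_TD_dissipativity
    {d r : ℕ} (hd : 0 < d)
    (P : Matrix (Fin d) (Fin d) ℝ)
    (hP_nonneg : ∀ i j, 0 ≤ P i j)
    (hP_row : ∀ i, ∑ j, P i j = 1)
    (μ : Fin d → ℝ)
    (hμ_pos : ∀ i, 0 < μ i)
    (hμ_sum : ∑ i, μ i = 1)
    (hμ_inv : ∀ j, ∑ i, μ i * P i j = μ j)
    (γ lam : ℝ) (hγ0 : 0 < γ) (hγ1 : γ < 1) (hlam0 : 0 ≤ lam) (hlam1 : lam < 1)
    (A : Matrix (Fin d) (Fin r) ℝ)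
    (σ : ℝ) (hσ : 0 < σ)
    (hA : ∀ v : Fin r → ℝ, σ * eNorm v ≤ muNorm μ (A.mulVec v))
    (v : Fin r → ℝ) :
    muInner μ (A.mulVec v) (γ • (Plam P γ lam).mulVec (A.mulVec v) - A.mulVec v)
      ≤ (γ - 1) * σ ^ 2 * eNorm v ^ 2 := by
  set x : Fin d → ℝ := A.mulVec v with hx
  set c : ℝ := lam * γ with hc
  have hμ0 : ∀ i, 0 ≤ μ i := fun i => (hμ_pos i).le
  have hc0 : 0 ≤ c := mul_nonneg hlam0 hγ0.le
  have hc1 : c < 1 := lt_of_le_of_lt (mul_le_of_le_one_right hlam0 hγ1.le) hlam1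
  have hgeo : Summable (fun m : ℕ => c ^ m) := summable_geometric_of_lt_one hc0 hc1
  -- summability of the matrix series, entrywise
  have hS1 : ∀ i j, Summable (fun m : ℕ => c ^ m * (P ^ (m + 1)) i j) := by
    intro i j
    apply Summable.of_nonneg_of_le
      (fun m => mul_nonneg (pow_nonneg hc0 m) ((pow_stoch P hP_nonneg hP_row (m+1)).1 i j))
      (fun m => ?_) hgeo
    calc c ^ m * (P ^ (m + 1)) i j ≤ c ^ m * 1 :=
          mul_le_mul_of_nonneg_left (pow_entry_le_one P hP_nonneg hP_row (m+1) i j)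
            (pow_nonneg hc0 m)
      _ = c ^ m := mul_one _
  have hSmat : Summable (fun m : ℕ => c ^ m • P ^ (m + 1)) := by
    apply Pi.summable.mpr; intro i
    apply Pi.summable.mpr; intro j
    simpa [Matrix.smul_apply, smul_eq_mul] using hS1 i j
  have hentry : ∀ i j, Plam P γ lam i j = (1 - lam) * ∑' m : ℕ, c ^ m * (P ^ (m + 1)) i j := by
    intro i j
    have e : Plam P γ lam i j
        = (1 - lam) * ((∑' m : ℕ, c ^ m • P ^ (m + 1)) i j) := by
      rw [hc]; rfl
    rw [e]
    congr 1
    calc (∑' m : ℕ, c ^ m • P ^ (m + 1)) i j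
        = (∑' m : ℕ, (c ^ m • P ^ (m + 1)) i) j := by
          exact congrFun (tsum_apply hSmat) j
      _ = ∑' m : ℕ, (c ^ m • P ^ (m + 1)) i j := tsum_apply (Pi.summable.mp hSmat i)
      _ = ∑' m : ℕ, c ^ m * (P ^ (m + 1)) i j := tsum_congr fun m => rfl
  -- the entrywise formula for Plam.mulVec
  have hmv : ∀ i, (Plam P γ lam).mulVec x i
      = (1 - lam) * ∑' m : ℕ, c ^ m * ((P ^ (m + 1)).mulVec x i) := by
    intro i
    show ∑ j, Plam P γ lam i j * x j = _
    calc ∑ j, Plam P γ lam i j * x j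
        = ∑ j, (1 - lam) * ∑' m : ℕ, c ^ m * (P ^ (m + 1)) i j * x j := by
          apply Finset.sum_congr rfl; intro j _
          rw [hentry i j, mul_assoc, ← tsum_mul_right]
      _ = (1 - lam) * ∑ j, ∑' m : ℕ, c ^ m * (P ^ (m + 1)) i j * x j := by
          rw [Finset.mul_sum]
      _ = (1 - lam) * ∑' m : ℕ, ∑ j, c ^ m * (P ^ (m + 1)) i j * x j := by
          rw [Summable.tsum_finsetSum (fun j _ => (hS1 i j).mul_right (x j))]
      _ = (1 - lam) * ∑' m : ℕ, c ^ m * ((P ^ (m + 1)).mulVec x i) := by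
          congr 1; apply tsum_congr; intro m
          show _ = c ^ m * ∑ j, (P ^ (m+1)) i j * x j
          rw [Finset.mul_sum]
          exact Finset.sum_congr rfl fun j _ => by ring
  -- scalar summability of the inner products
  set X : ℝ := muInner μ x x with hX
  have hX0 : 0 ≤ X := muInner_self_nonneg μ x hμ0
  have hip_bound : ∀ m : ℕ, |muInner μ x ((P ^ (m + 1)).mulVec x)| ≤ X := by
    intro m
    obtain ⟨h0, h1⟩ := pow_stoch P hP_nonneg hP_row (m + 1)
    have hne := stoch_nonexp (P ^ (m + 1)) h0 h1 μ hμ0 (pow_inv P μ hμ_inv (m + 1)) x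
    have hnn : muNorm μ ((P ^ (m + 1)).mulVec x) ≤ muNorm μ x := Real.sqrt_le_sqrt hne
    have hnx : 0 ≤ muNorm μ x := Real.sqrt_nonneg _
    calc |muInner μ x ((P ^ (m + 1)).mulVec x)|
        ≤ muNorm μ x * muNorm μ ((P ^ (m + 1)).mulVec x) := muInner_abs_cs μ _ _ hμ0
      _ ≤ muNorm μ x * muNorm μ x := mul_le_mul_of_nonneg_left hnn hnx
      _ = X := Real.mul_self_sqrt hX0
  have hSip : ∀ i, Summable (fun m : ℕ => c ^ m * ((P ^ (m + 1)).mulVec x i)) := by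
    intro i
    have : ∀ m : ℕ, (fun m : ℕ => c ^ m * ((P ^ (m + 1)).mulVec x i)) m
        = ∑ j, c ^ m * (P ^ (m + 1)) i j * x j := by
      intro m
      show c ^ m * ∑ j, (P ^ (m+1)) i j * x j = _
      rw [Finset.mul_sum]
      exact Finset.sum_congr rfl fun j _ => by ring
    rw [funext this]
    exact summable_sum fun j _ => (hS1 i j).mul_right (x j)
  -- the key identity
  have hkey : muInner μ x ((Plam P γ lam).mulVec x)
      = (1 - lam) * ∑' m : ℕ, c ^ m * muInner μ x ((P ^ (m + 1)).mulVec x) := by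
    unfold muInner
    calc ∑ i, μ i * x i * (Plam P γ lam).mulVec x i
        = ∑ i, (1 - lam) * ∑' m : ℕ, μ i * x i * (c ^ m * ((P ^ (m + 1)).mulVec x i)) := by
          apply Finset.sum_congr rfl; intro i _
          rw [hmv i, tsum_mul_left]
          ring
      _ = (1 - lam) * ∑ i, ∑' m : ℕ, μ i * x i * (c ^ m * ((P ^ (m + 1)).mulVec x i)) := by
          rw [Finset.mul_sum]
      _ = (1 - lam) * ∑' m : ℕ, ∑ i, μ i * x i * (c ^ m * ((P ^ (m + 1)).mulVec x i)) := by
          rw [Summable.tsum_finsetSum (fun i _ => ((hSip i).mul_left (μ i * x i)))]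
      _ = (1 - lam) * ∑' m : ℕ, c ^ m * muInner μ x ((P ^ (m + 1)).mulVec x) := by
          congr 1; apply tsum_congr; intro m
          unfold muInner
          rw [Finset.mul_sum]
          exact Finset.sum_congr rfl fun i _ => by ring
  -- bound the tsum
  have hSminor : Summable (fun m : ℕ => c ^ m * muInner μ x ((P ^ (m + 1)).mulVec x)) := by
    apply Summable.of_norm_bounded (hgeo.mul_right X)
    intro m
    rw [Real.norm_eq_abs, abs_mul, abs_pow, abs_of_nonneg hc0]
    exact mul_le_mul_of_nonneg_left (hip_bound m) (pow_nonneg hc0 m)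
  have htsum_le : (∑' m : ℕ, c ^ m * muInner μ x ((P ^ (m + 1)).mulVec x))
      ≤ (1 - c)⁻¹ * X := by
    have h1 : (∑' m : ℕ, c ^ m * muInner μ x ((P ^ (m + 1)).mulVec x))
        ≤ ∑' m : ℕ, c ^ m * X := by
      apply Summable.tsum_le_tsum _ hSminor (hgeo.mul_right X)
      intro m
      exact mul_le_mul_of_nonneg_left (le_trans (le_abs_self _) (hip_bound m))
        (pow_nonneg hc0 m)
    rw [tsum_mul_right, tsum_geometric_of_lt_one hc0 hc1] at h1
    exact h1
  have hT : muInner μ x ((Plam P γ lam).mulVec x) ≤ (1 - lam) * ((1 - c)⁻¹ * X) := by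
    rw [hkey]
    exact mul_le_mul_of_nonneg_left htsum_le (by linarith)
  -- expand the goal
  have hexpand : muInner μ x (γ • (Plam P γ lam).mulVec x - x)
      = γ * muInner μ x ((Plam P γ lam).mulVec x) - muInner μ x x := by
    unfold muInner
    rw [Finset.mul_sum, ← Finset.sum_sub_distrib]
    apply Finset.sum_congr rfl; intro i _
    simp only [Pi.sub_apply, Pi.smul_apply, smul_eq_mul]
    ring
  rw [hexpand]
  -- algebra
  have hcpos : 0 < 1 - c := by linarith
  have hfrac : (1 - lam) * (1 - c)⁻¹ ≤ 1 := by
    rw [← div_eq_mul_inv, div_le_one hcpos]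
    have : c ≤ lam := mul_le_of_le_one_right hlam0 hγ1.le
    linarith
  have h2 : γ * ((1 - lam) * ((1 - c)⁻¹ * X)) ≤ γ * X := by
    have : (1 - lam) * ((1 - c)⁻¹ * X) ≤ X := by
      have h3 : (1 - lam) * (1 - c)⁻¹ * X ≤ 1 * X :=
        mul_le_mul_of_nonneg_right hfrac hX0
      linarith [h3, mul_assoc (1 - lam) (1 - c)⁻¹ X]
    exact mul_le_mul_of_nonneg_left this hγ0.le
  have h1 : γ * muInner μ x ((Plam P γ lam).mulVec x) ≤ γ * ((1 - lam) * ((1 - c)⁻¹ * X)) :=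
    mul_le_mul_of_nonneg_left hT hγ0.le
  have hXN : σ ^ 2 * eNorm v ^ 2 ≤ X := by
    have hAv := hA v
    have hN0 : 0 ≤ eNorm v := Real.sqrt_nonneg _
    have hsq : (σ * eNorm v) ^ 2 ≤ muNorm μ x ^ 2 :=
      pow_le_pow_left₀ (mul_nonneg hσ.le hN0) hAv 2
    have hmn : muNorm μ x ^ 2 = X := Real.sq_sqrt hX0
    calc σ ^ 2 * eNorm v ^ 2 = (σ * eNorm v) ^ 2 := by ring
      _ ≤ muNorm μ x ^ 2 := hsq
      _ = X := hmn
  have hfinal : (γ - 1) * X ≤ (γ - 1) * (σ ^ 2 * eNorm v ^ 2) := by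
    apply mul_le_mul_of_nonpos_left hXN (by linarith)
  nlinarith [h1, h2, hfinal]
end
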